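/- Let A and B be categories, Φ : A ⥤ B a functor, F : [1] ⥤ Cat the functor with F(0) = A and F(1) = B sending the arrow 0 ≤ 1 to Φ, and p : ∫F ⥤ [1] the projection from the Grothendieck construction of F. Then the category whose objects are functors G : sd(1) ⥤ ∫F satisfying G ⋙ p = max and sending the inclusion {0} ⊆ {0,1} to a p-cocartesian morphism, and whose morphisms are natural transformations whose image under p is the identity, is equivalent to the comma category Comma (𝟭 B) Φ, whose objects are triples (b ∈ B, a ∈ A, f : b ⟶ Φ a) and whose morphisms are compatible pairs of morphisms in B and A. -/

import Mathlib

open CategoryTheory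

universe v u

/-- The subdivision `sd([1])`: the poset of nonempty subsets of `Fin 2`,
namely `{0}, {1}, {0,1}`, ordered by inclusion. -/
abbrev Sd1 := {S : Finset (Fin 2) // S.Nonempty}

/-- The functor `max : sd([1]) ⥤ [1]` sending a nonempty subset to its maximum. -/
def sdMax : Sd1 ⥤ Fin 2 where
  obj S := S.1.max' S.2
  map {S T} f := homOfLE (Finset.max'_subset S.2 (leOfHom f))
  map_id _ := rfl
  map_comp _ _ := rfl

/-- The object `{0}` of `sd([1])`. -/
def sd0 : Sd1 := ⟨{0}, Finset.singleton_nonempty 0⟩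

/-- The object `{0, 1}` of `sd([1])`. -/
def sd01 : Sd1 := ⟨{0, 1}, Finset.insert_nonempty 0 {1}⟩

/-- The inclusion `{0} ⊆ {0, 1}` in `sd([1])`. -/
def sdIota : sd0 ⟶ sd01 :=
  homOfLE (by exact Finset.singleton_subset_iff.2 (Finset.mem_insert_self 0 {1}))

/-!
`sd(1)` is the walking cospan `{0} ⟶ {0,1} ⟵ {1}`, so a functor `G` over `max` is a cospan
`(0, a) ⟶ (1, c) ⟵ (1, b)` in `∫F`. Its left leg is cocartesian exactly when its fiber
`Φ a ⟶ c` is invertible, and then `G` is isomorphic to the cospan `(0, a) ⟶ (1, Φ a) ⟵ (1, b)`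
glued from the comma object `b ⟶ Φ a`. A morphism over the identity is a triple of fiber
maps, and the one at `{0,1}` is forced to be `Φ` of the one at `{0}` because the left legs are
cocartesian; so morphisms are exactly those of the comma category.
-/
open CategoryTheory.Limits
open CategoryTheory.ComposableArrows (mk₁)

def sd1 : Sd1 := ⟨{1}, Finset.singleton_nonempty 1⟩

def sdJ1 : sd1 ⟶ sd01 := homOfLE (by decide)

lemma Sd1.eq_sd0_or_eq_sd1_or_eq_sd01 (S : Sd1) : S = sd0 ∨ S = sd1 ∨ S = sd01 := by
  revert S; decide

lemma Sd1.eq_sd01_of_le_of_ne {S T : Sd1} (hle : S ≤ T) (hne : S ≠ T) : T = sd01 := by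
  revert S T; decide

def sdToCospanObj (S : Sd1) : WalkingCospan :=
  if (1 : Fin 2) ∉ S.1 then .left else if (0 : Fin 2) ∉ S.1 then .right else .one

def WalkingCospan.toOne : ∀ X : WalkingCospan, X ⟶ WalkingCospan.one
  | none => 𝟙 _
  | some j => WidePullbackShape.Hom.term j

def sdToCospan : Sd1 ⥤ WalkingCospan where
  obj := sdToCospanObj
  map {S T} f :=
    if h : S = T then eqToHom (congrArg sdToCospanObj h)
    else WalkingCospan.toOne _ ≫
      eqToHom (congrArg sdToCospanObj (Sd1.eq_sd01_of_le_of_ne (leOfHom f) h)).symm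

lemma sdToCospan_map_sdIota : sdToCospan.map sdIota = WalkingCospan.Hom.inl :=
  Subsingleton.elim _ _

lemma sdToCospan_map_sdJ1 : sdToCospan.map sdJ1 = WalkingCospan.Hom.inr :=
  Subsingleton.elim _ _

def idIsoSdToCospanCompCospan : 𝟭 Sd1 ≅ sdToCospan ⋙ cospan sdIota sdJ1 :=
  NatIso.ofComponents
    (fun S => eqToIso (by obtain rfl | rfl | rfl := S.eq_sd0_or_eq_sd1_or_eq_sd01 <;> rfl))
    (fun _ => Subsingleton.elim _ _)

def isoSdToCospanCompCospan {C : Type*} [Category C] (G : Sd1 ⥤ C) :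
    G ≅ sdToCospan ⋙ cospan (G.map sdIota) (G.map sdJ1) :=
  G.leftUnitor.symm ≪≫ Functor.isoWhiskerRight idIsoSdToCospanCompCospan G ≪≫
    Functor.associator _ _ _ ≪≫ Functor.isoWhiskerLeft sdToCospan (cospanCompIso G sdIota sdJ1)

section Gluing

variable {A B : Cat.{v, u}} (Φ : A ⟶ B)

def ι₀ : A ⥤ Grothendieck (mk₁ Φ) := Grothendieck.ι (mk₁ Φ) 0

def ι₁ : B ⥤ Grothendieck (mk₁ Φ) := Grothendieck.ι (mk₁ Φ) 1

def cocartesianArrow : ι₀ Φ ⟶ Φ.toFunctor ⋙ ι₁ Φ :=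
  Grothendieck.ιNatTrans (homOfLE (by decide))

variable {Φ}

lemma ι₀_map_fiber {a a' : A} (f : (ι₀ Φ).obj a ⟶ (ι₀ Φ).obj a') : (ι₀ Φ).map f.fiber = f :=
  Grothendieck.ext _ _ (Subsingleton.elim _ _) ((Category.id_comp _).trans (Category.id_comp _))

lemma ι₁_map_fiber {b b' : B} (f : (ι₁ Φ).obj b ⟶ (ι₁ Φ).obj b') : (ι₁ Φ).map f.fiber = f :=
  Grothendieck.ext _ _ (Subsingleton.elim _ _) ((Category.id_comp _).trans (Category.id_comp _))

instance : (ι₀ Φ).Full := ⟨fun f => ⟨_, ι₀_map_fiber f⟩⟩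

instance : (ι₁ Φ).Full := ⟨fun f => ⟨_, ι₁_map_fiber f⟩⟩

instance : (ι₀ Φ).Faithful := inferInstanceAs (Grothendieck.ι (mk₁ Φ) 0).Faithful

instance : (ι₁ Φ).Faithful := inferInstanceAs (Grothendieck.ι (mk₁ Φ) 1).Faithful

lemma fiber_cocartesianArrow_app_comp {a : A} {c : B}
    (g : (ι₁ Φ).obj (Φ.toFunctor.obj a) ⟶ (ι₁ Φ).obj c) :
    ((cocartesianArrow Φ).app a ≫ g).fiber = g.fiber :=
  (Category.id_comp _).trans (Category.id_comp _)

lemma cocartesianArrow_app_comp_ι₁_map_fiber {a : A} {c : B}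
    (f : (ι₀ Φ).obj a ⟶ (ι₁ Φ).obj c) : (cocartesianArrow Φ).app a ≫ (ι₁ Φ).map f.fiber = f :=
  Grothendieck.ext _ _ (Subsingleton.elim _ _) (by
    show 𝟙 _ ≫ 𝟙 _ ≫ 𝟙 _ ≫ 𝟙 _ ≫ f.fiber = f.fiber
    simp)

lemma cocartesianArrow_app_cancel {a : A} {c : B}
    {g g' : (ι₁ Φ).obj (Φ.toFunctor.obj a) ⟶ (ι₁ Φ).obj c}
    (h : (cocartesianArrow Φ).app a ≫ g = (cocartesianArrow Φ).app a ≫ g') : g = g' := by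
  have h' := congrArg (fun k => (k.fiber : Φ.toFunctor.obj a ⟶ c)) h
  simp only [fiber_cocartesianArrow_app_comp] at h'
  exact (ι₁_map_fiber g).symm.trans ((congrArg (ι₁ Φ).map h').trans (ι₁_map_fiber g'))

variable (Φ)

def gluingCospan : WalkingCospan ⥤ (Comma (𝟭 B) Φ.toFunctor ⥤ Grothendieck (mk₁ Φ)) :=
  cospan (Functor.whiskerLeft (Comma.snd _ _) (cocartesianArrow Φ))
    (Functor.whiskerRight (Comma.natTrans _ _) (ι₁ Φ))

def gluing : Comma (𝟭 B) Φ.toFunctor ⥤ Sd1 ⥤ Grothendieck (mk₁ Φ) :=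
  (gluingCospan Φ).flip ⋙ (Functor.whiskeringLeft _ _ _).obj sdToCospan

variable {Φ}

lemma gluing_obj_map_sdIota (T : Comma (𝟭 B) Φ.toFunctor) :
    ((gluing Φ).obj T).map sdIota = (cocartesianArrow Φ).app T.right := by
  dsimp [gluing]
  rw [sdToCospan_map_sdIota]
  rfl

lemma gluing_obj_map_sdJ1 (T : Comma (𝟭 B) Φ.toFunctor) :
    ((gluing Φ).obj T).map sdJ1 = (ι₁ Φ).map T.hom := by
  dsimp [gluing]
  rw [sdToCospan_map_sdJ1]
  rfl

abbrev IsRlaxSection (G : Sd1 ⥤ Grothendieck (mk₁ Φ)) : Prop :=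
  G ⋙ Grothendieck.forget _ = sdMax ∧ IsIso (G.map sdIota).fiber

lemma isRlaxSection_gluing_obj (T : Comma (𝟭 B) Φ.toFunctor) :
    IsRlaxSection ((gluing Φ).obj T) := by
  refine ⟨CategoryTheory.Functor.ext (fun S => ?_) (fun _ _ _ => Subsingleton.elim _ _), ?_⟩
  · obtain rfl | rfl | rfl := S.eq_sd0_or_eq_sd1_or_eq_sd01 <;> rfl
  · rw [gluing_obj_map_sdIota]
    exact inferInstanceAs (IsIso (𝟙 _))

instance : (gluing Φ).Faithful where
  map_injective h :=
    Comma.hom_ext _ _ ((ι₁ Φ).map_injective (NatTrans.congr_app h sd1))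
      ((ι₀ Φ).map_injective (NatTrans.congr_app h sd0))

instance : (gluing Φ).Full where
  map_surjective {X Y} θ := by
    obtain ⟨r, h0⟩ : ∃ r : X.right ⟶ Y.right, (ι₀ Φ).map r = θ.app sd0 :=
      (ι₀ Φ).map_surjective _
    obtain ⟨l, h1⟩ : ∃ l : X.left ⟶ Y.left, (ι₁ Φ).map l = θ.app sd1 :=
      (ι₁ Φ).map_surjective _
    have h01 : (ι₁ Φ).map (Φ.toFunctor.map r) = θ.app sd01 := by
      apply cocartesianArrow_app_cancel
      have := θ.naturality sdIota
      rw [gluing_obj_map_sdIota, gluing_obj_map_sdIota, ← h0] at this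
      exact ((cocartesianArrow Φ).naturality _).symm.trans this.symm
    have w : l ≫ Y.hom = X.hom ≫ Φ.toFunctor.map r := by
      apply (ι₁ Φ).map_injective
      have := θ.naturality sdJ1
      rw [gluing_obj_map_sdJ1, gluing_obj_map_sdJ1, ← h1, ← h01] at this
      rw [Functor.map_comp, Functor.map_comp]
      exact this.symm
    refine ⟨⟨l, r, w⟩, ?_⟩
    ext S
    obtain rfl | rfl | rfl := S.eq_sd0_or_eq_sd1_or_eq_sd01
    exacts [h0, h1, h01]

def cospanIsoGluingCospanFlipObj {a : A} {b c : B} (e : Φ.toFunctor.obj a ≅ c) (k : b ⟶ c) :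
    cospan ((cocartesianArrow Φ).app a ≫ (ι₁ Φ).map e.hom) ((ι₁ Φ).map k) ≅
      (gluingCospan Φ).flip.obj ⟨b, a, k ≫ e.inv⟩ :=
  cospanExt (f' := (cocartesianArrow Φ).app a) (g' := (ι₁ Φ).map (k ≫ e.inv))
    (Iso.refl _) (Iso.refl _) ((ι₁ Φ).mapIso e.symm) (by simp [← Functor.map_comp])
    (by simp) ≪≫ (diagramIsoCospan ((gluingCospan Φ).flip.obj ⟨b, a, k ≫ e.inv⟩)).symm

lemma exists_cospan_iso_gluingCospan_flip_obj {X Y Z : Grothendieck (mk₁ Φ)} (f : X ⟶ Z)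
    (g : Y ⟶ Z) (hX : X.base = 0) (hY : Y.base = 1) (hZ : Z.base = 1) (hf : IsIso f.fiber) :
    ∃ T : Comma (𝟭 B) Φ.toFunctor, Nonempty (cospan f g ≅ (gluingCospan Φ).flip.obj T) := by
  obtain ⟨_, a⟩ := X
  obtain ⟨_, b⟩ := Y
  obtain ⟨_, c⟩ := Z
  dsimp only at hX hY hZ
  subst hX hY hZ
  rw [← cocartesianArrow_app_comp_ι₁_map_fiber f, ← ι₁_map_fiber g]
  -- `hf` lives over the fiber category `(mk₁ Φ).obj 1`, which is `B` only after unfolding.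
  exact ⟨_, ⟨cospanIsoGluingCospanFlipObj (@asIso _ _ _ _ f.fiber hf) g.fiber⟩⟩

instance : (ObjectProperty.lift IsRlaxSection (gluing Φ) isRlaxSection_gluing_obj).IsEquivalence where
  essSurj.mem_essImage := by
    rintro ⟨G, hG, hiso⟩
    obtain ⟨T, ⟨e⟩⟩ := exists_cospan_iso_gluingCospan_flip_obj (G.map sdIota) (G.map sdJ1)
      (Functor.congr_obj hG sd0) (Functor.congr_obj hG sd1) (Functor.congr_obj hG sd01) hiso
    exact ⟨T, ⟨ObjectProperty.isoMk _
      (Functor.isoWhiskerLeft sdToCospan e.symm ≪≫ (isoSdToCospanCompCospan G).symm)⟩⟩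

end Gluing

/-- For a functor `Φ : A ⥤ B`, classified by the functor `F : [1] ⥤ Cat` with `F(0) = A`,
`F(1) = B`, the category of functors `G : sd([1]) ⥤ ∫F` lying over `max : sd([1]) ⥤ [1]`
and sending the inclusion `{0} ⊆ {0,1}` to a cocartesian morphism (i.e. one whose fiber
component is an isomorphism) — with morphisms the natural transformations projecting to
identities — is equivalent to the comma category of triples `(b, a, f : b ⟶ Φ a)`. -/
theorem rlaxLimit_over_interval_equiv_comma (A B : Cat.{v, u}) (Φ : A ⟶ B) :
    Nonempty
      (ObjectProperty.FullSubcategory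
          (fun G : Sd1 ⥤ Grothendieck (ComposableArrows.mk₁ Φ) =>
            G ⋙ Grothendieck.forget _ = sdMax ∧ IsIso (G.map sdIota).fiber) ≌
        Comma (𝟭 ↥B) Φ.toFunctor) :=
  ⟨(ObjectProperty.lift _ (gluing Φ) isRlaxSection_gluing_obj).asEquivalence.symm⟩
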